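/- arXiv:math/0403054 — 3 statements merged into one kernel-verified Lean document; each statement's English description precedes it below -/
import Mathlib

section
/- (Dobinski formula for exponential polynomials) For every natural number n and every real x, Σ_{k=0}^n S(n,k) x^k = e^{−x} · Σ_{j≥0} j^n x^j / j!, where the series on the right converges for all real x. -/
/-- Stirling numbers of the second kind: `S(0,0) = 1`, `S(0,k) = 0` for `k > 0`,
`S(n+1,0) = 0` and `S(n+1,k) = S(n,k-1) + k·S(n,k)` for `k ≥ 1`. -/
def stirling : ℕ → ℕ → ℕ
  | 0, 0 => 1
  | 0, _ + 1 => 0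
  | _ + 1, 0 => 0
  | n + 1, k + 1 => stirling n k + (k + 1) * stirling n (k + 1)

lemma stirling_eq_zero : ∀ n k : ℕ, n < k → stirling n k = 0
  | 0, _ + 1, _ => rfl
  | n + 1, k + 1, h => by
    have h1 := stirling_eq_zero n k (by omega)
    have h2 := stirling_eq_zero n (k + 1) (by omega)
    simp [stirling, h1, h2]

lemma mul_descFactorial (j k : ℕ) :
    j * j.descFactorial k = j.descFactorial (k + 1) + k * j.descFactorial k := by
  rw [Nat.descFactorial_succ]
  rcases le_or_gt k j with h | h
  · rw [← Nat.add_mul, Nat.sub_add_cancel h]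
  · rw [Nat.descFactorial_eq_zero_iff_lt.mpr h]; simp

lemma pow_eq_sum_stirling (n j : ℕ) :
    j ^ n = ∑ k ∈ Finset.range (n + 1), stirling n k * j.descFactorial k := by
  induction n with
  | zero => simp [stirling]
  | succ n ih =>
    have key : ∑ k ∈ Finset.range (n + 1), k * stirling n k * j.descFactorial k
        = ∑ k ∈ Finset.range (n + 1), (k + 1) * stirling n (k + 1) * j.descFactorial (k + 1) := by
      rw [Finset.sum_range_succ' (fun k => k * stirling n k * j.descFactorial k) n,
        Finset.sum_range_succ (fun k => (k + 1) * stirling n (k + 1) * j.descFactorial (k + 1)) n,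
        stirling_eq_zero n (n + 1) (by omega)]
      simp [add_comm]
    calc j ^ (n + 1)
        = ∑ k ∈ Finset.range (n + 1), stirling n k *
            (j.descFactorial (k + 1) + k * j.descFactorial k) := by
          rw [pow_succ, ih, Finset.sum_mul]
          refine Finset.sum_congr rfl fun k _ => ?_
          rw [mul_assoc, mul_comm (j.descFactorial k) j, mul_descFactorial]
      _ = ∑ k ∈ Finset.range (n + 1), stirling n k * j.descFactorial (k + 1)
            + ∑ k ∈ Finset.range (n + 1), k * stirling n k * j.descFactorial k := by
          rw [← Finset.sum_add_distrib]
          refine Finset.sum_congr rfl fun k _ => ?_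
          ring
      _ = ∑ k ∈ Finset.range (n + 1),
            (stirling n k + (k + 1) * stirling n (k + 1)) * j.descFactorial (k + 1) := by
          rw [key, ← Finset.sum_add_distrib]
          refine Finset.sum_congr rfl fun k _ => ?_
          ring
      _ = ∑ k ∈ Finset.range (n + 2), stirling (n + 1) k * j.descFactorial k := by
          rw [Finset.sum_range_succ' (fun k => stirling (n + 1) k * j.descFactorial k) (n + 1)]
          simp [stirling]

lemma exp_eq_tsum_real (y : ℝ) : Real.exp y = ∑' n : ℕ, y ^ n / (Nat.factorial n : ℝ) := by
  rw [Real.exp_eq_exp_ℝ, NormedSpace.exp_eq_tsum_div]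

lemma descFact_term (x : ℝ) (k : ℕ) :
    Summable (fun j : ℕ => (j.descFactorial k : ℝ) * x ^ j / (Nat.factorial j : ℝ)) ∧
    ∑' j : ℕ, (j.descFactorial k : ℝ) * x ^ j / (Nat.factorial j : ℝ)
      = x ^ k * Real.exp x := by
  set g : ℕ → ℝ := fun j => (j.descFactorial k : ℝ) * x ^ j / (Nat.factorial j : ℝ) with hg
  have hzero : ∀ j < k, g j = 0 := by
    intro j hj
    simp [hg, Nat.descFactorial_eq_zero_iff_lt.mpr hj]
  have hshift : ∀ j : ℕ, g (j + k) = x ^ k * (x ^ j / (Nat.factorial j : ℝ)) := by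
    intro j
    have hfac : (Nat.factorial j : ℝ) * ((j + k).descFactorial k : ℝ)
        = (Nat.factorial (j + k) : ℝ) := by
      have := Nat.factorial_mul_descFactorial (Nat.le_add_left k j)
      rw [Nat.add_sub_cancel] at this
      exact_mod_cast this
    have hne : (Nat.factorial (j + k) : ℝ) ≠ 0 := by positivity
    have hne' : (Nat.factorial j : ℝ) ≠ 0 := by positivity
    have hd : ((j + k).descFactorial k : ℝ) ≠ 0 := by
      intro h; rw [h, mul_zero] at hfac; exact hne hfac.symm
    simp only [hg]
    rw [← hfac, mul_comm (Nat.factorial j : ℝ), mul_div_mul_left _ _ hd, pow_add]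
    ring
  have hsum' : Summable (fun j : ℕ => g (j + k)) := by
    simp only [hshift]
    exact (Real.summable_pow_div_factorial x).mul_left _
  have hsum : Summable g := (summable_nat_add_iff k).mp hsum'
  refine ⟨hsum, ?_⟩
  have := hsum.sum_add_tsum_nat_add k
  rw [Finset.sum_eq_zero (fun j hj => hzero j (Finset.mem_range.mp hj)), zero_add] at this
  rw [← this]
  simp only [hshift]
  rw [tsum_mul_left, ← exp_eq_tsum_real]

/-- Dobinski formula for exponential polynomials:
`Σ_{k=0}^n S(n,k) x^k = e^{-x} · Σ_{j ≥ 0} jⁿ xʲ / j!`, the series converging for all `x`. -/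
theorem dobinski_expPoly (n : ℕ) (x : ℝ) :
    Summable (fun j : ℕ => (j : ℝ) ^ n * x ^ j / (Nat.factorial j : ℝ)) ∧
      ∑ k ∈ Finset.range (n + 1), (stirling n k : ℝ) * x ^ k =
        Real.exp (-x) * ∑' j : ℕ, (j : ℝ) ^ n * x ^ j / (Nat.factorial j : ℝ) := by
  have hrep : ∀ j : ℕ, (j : ℝ) ^ n * x ^ j / (Nat.factorial j : ℝ)
      = ∑ k ∈ Finset.range (n + 1),
          (stirling n k : ℝ) * ((j.descFactorial k : ℝ) * x ^ j / (Nat.factorial j : ℝ)) := by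
    intro j
    have h := pow_eq_sum_stirling n j
    have h' : ((j : ℝ) ^ n) = ∑ k ∈ Finset.range (n + 1),
        (stirling n k : ℝ) * (j.descFactorial k : ℝ) := by exact_mod_cast h
    rw [h', Finset.sum_mul, Finset.sum_div]
    congr 1; ext k; ring
  have hsum : Summable (fun j : ℕ => (j : ℝ) ^ n * x ^ j / (Nat.factorial j : ℝ)) := by
    rw [show (fun j : ℕ => (j : ℝ) ^ n * x ^ j / (Nat.factorial j : ℝ)) = fun j =>
        ∑ k ∈ Finset.range (n + 1),
          (stirling n k : ℝ) * ((j.descFactorial k : ℝ) * x ^ j / (Nat.factorial j : ℝ))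
      from funext hrep]
    exact summable_sum (fun k _ => ((descFact_term x k).1.mul_left _))
  refine ⟨hsum, ?_⟩
  have htsum : ∑' j : ℕ, (j : ℝ) ^ n * x ^ j / (Nat.factorial j : ℝ)
      = ∑ k ∈ Finset.range (n + 1), (stirling n k : ℝ) * (x ^ k * Real.exp x) := by
    calc ∑' j : ℕ, (j : ℝ) ^ n * x ^ j / (Nat.factorial j : ℝ)
        = ∑' j : ℕ, ∑ k ∈ Finset.range (n + 1),
            (stirling n k : ℝ) * ((j.descFactorial k : ℝ) * x ^ j / (Nat.factorial j : ℝ)) := by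
          exact tsum_congr hrep
      _ = ∑ k ∈ Finset.range (n + 1), ∑' j : ℕ,
            (stirling n k : ℝ) * ((j.descFactorial k : ℝ) * x ^ j / (Nat.factorial j : ℝ)) := by
          exact Summable.tsum_finsetSum (fun k _ => ((descFact_term x k).1.mul_left _))
      _ = ∑ k ∈ Finset.range (n + 1), (stirling n k : ℝ) * (x ^ k * Real.exp x) := by
          refine Finset.sum_congr rfl (fun k _ => ?_)
          rw [tsum_mul_left, (descFact_term x k).2]
  rw [htsum, Finset.mul_sum]
  refine Finset.sum_congr rfl (fun k _ => ?_)
  have h1 : Real.exp (-x) * Real.exp x = 1 := by rw [← Real.exp_add]; simp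
  linear_combination (-(stirling n k : ℝ) * x ^ k) * h1
end

section
/- (Cigler q-Stirling expansion) Fix a real number q. For every n ≥ 1, the polynomial identity X(X + q − 1)(X + q^2 − 1)⋯(X + q^{n−1} − 1) = Σ_{k=1}^n S̃_q(n,k) · X(X−1)(X−2)⋯(X−k+1) holds in ℝ[X], where S̃_q(n,k) = Σ_{π} q^{cigl(π)}, the sum running over all partitions π of the set {0,1,…,n−1} into exactly k nonempty blocks, and cigl(π) is the sum of the elements of the block of π containing 0. -/
open Finset

variable {α : Type*} [DecidableEq α] [Fintype α]

instance finpartitionDecEq {s : Finset α} : DecidableEq (Finpartition s) :=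
  fun P Q => decidable_of_iff (P.parts = Q.parts) ⟨fun h => Finpartition.ext h, fun h => h ▸ rfl⟩

lemma finpartition_ext_part {P Q : Finpartition (univ : Finset α)}
    (h : ∀ a, P.part a = Q.part a) : P = Q := by
  apply Finpartition.ext
  ext t
  constructor
  · intro ht
    obtain ⟨a, ha⟩ := P.nonempty_of_mem_parts ht
    have := P.part_eq_of_mem ht ha
    rw [h a] at this
    exact this ▸ Q.part_mem.2 (mem_univ a)
  · intro ht
    obtain ⟨a, ha⟩ := Q.nonempty_of_mem_parts ht
    have := Q.part_eq_of_mem ht ha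
    rw [← h a] at this
    exact this ▸ P.part_mem.2 (mem_univ a)

variable {n m : ℕ}

/-- The kernel setoid of a function. -/
def kerS (f : Fin n → Fin m) : Setoid (Fin n) where
  r a b := f a = f b
  iseqv := ⟨fun _ => rfl, Eq.symm, Eq.trans⟩

instance (f : Fin n → Fin m) : DecidableRel (kerS f).r :=
  fun a b => inferInstanceAs (Decidable (f a = f b))

/-- The fiber partition of a function. -/
def fp (f : Fin n → Fin m) : Finpartition (univ : Finset (Fin n)) :=
  Finpartition.ofSetoid (kerS f)

lemma mem_part_fp {f : Fin n → Fin m} {a b : Fin n} : b ∈ (fp f).part a ↔ f a = f b :=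
  Finpartition.mem_part_ofSetoid_iff_rel

lemma part_fp_eq {f : Fin n → Fin m} {a b : Fin n} :
    (fp f).part a = (fp f).part b ↔ f a = f b := by
  constructor
  · intro h
    exact (mem_part_fp.1 (h ▸ (fp f).mem_part (mem_univ b))).symm ▸ rfl
  · intro h
    rw [← (fp f).mem_part_iff_part_eq_part (mem_univ a) (mem_univ b)]
    exact mem_part_fp.2 h.symm

lemma card_fp_eq (π : Finpartition (univ : Finset (Fin n))) :
    (univ.filter fun f : Fin n → Fin m => fp f = π).card = m.descFactorial π.parts.card := by
  have h1 : m.descFactorial π.parts.card = Fintype.card (↥π.parts ↪ Fin m) := by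
    rw [Fintype.card_embedding_eq, Fintype.card_fin, Fintype.card_coe]
  rw [h1, ← Finset.card_univ]
  refine Finset.card_bij'
    (fun f hf => ⟨fun b => f ((π.nonempty_of_mem_parts b.2).choose), ?_⟩)
    (fun g _ => fun i => g ⟨π.part i, π.part_mem.2 (mem_univ i)⟩) (fun _ _ => mem_univ _)
    ?_ ?_ ?_
  · -- injectivity
    intro b b' h
    have hf' : fp f = π := (mem_filter.1 hf).2
    have h2 : (fp f).part (π.nonempty_of_mem_parts b.2).choose
        = (fp f).part (π.nonempty_of_mem_parts b'.2).choose := part_fp_eq.2 h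
    rw [hf'] at h2
    have e1 : π.part (π.nonempty_of_mem_parts b.2).choose = b.1 :=
      π.part_eq_of_mem b.2 (π.nonempty_of_mem_parts b.2).choose_spec
    have e2 : π.part (π.nonempty_of_mem_parts b'.2).choose = b'.1 :=
      π.part_eq_of_mem b'.2 (π.nonempty_of_mem_parts b'.2).choose_spec
    exact Subtype.ext (e1 ▸ e2 ▸ h2)
  · -- j maps into s
    intro g _
    rw [mem_filter]
    refine ⟨mem_univ _, finpartition_ext_part fun a => ?_⟩
    ext b
    rw [mem_part_fp]
    have : (g ⟨π.part a, π.part_mem.2 (mem_univ a)⟩ = g ⟨π.part b, π.part_mem.2 (mem_univ b)⟩)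
        ↔ π.part a = π.part b := by
      constructor
      · intro h; exact Subtype.ext_iff.1 (g.injective h)
      · intro h; exact congrArg g (Subtype.ext h)
    rw [this]
    exact eq_comm.trans (π.mem_part_iff_part_eq_part (mem_univ b) (mem_univ a)).symm
  · -- left inverse
    intro f hf
    have hf' : fp f = π := (mem_filter.1 hf).2
    funext i
    have hm : (π.nonempty_of_mem_parts (π.part_mem.2 (mem_univ i))).choose ∈ (fp f).part i := by
      rw [hf']
      exact (π.nonempty_of_mem_parts (π.part_mem.2 (mem_univ i))).choose_spec
    exact (mem_part_fp.1 hm).symm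
  · -- right inverse
    intro g _
    ext b
    simp only [Function.Embedding.coeFn_mk]
    exact congrArg (fun x => ((g x : Fin m) : ℕ))
      (Subtype.ext (π.part_eq_of_mem b.2 (π.nonempty_of_mem_parts b.2).choose_spec))

lemma sum_weight (q : ℝ) (hn : 1 ≤ n) :
    ∑ f : Fin n → Fin m, q ^ (∑ i ∈ (fp f).part ⟨0, hn⟩, (i : ℕ)) =
      ∏ j ∈ range n, ((m : ℝ) + q ^ j - 1) := by
  set z : Fin n := ⟨0, hn⟩ with hz
  have hsub : ∀ F : Fin n → ℝ, ∏ i ∈ univ.erase z, F i = ∏ i : { j : Fin n // j ≠ z }, F i :=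
    fun F => Finset.prod_subtype (univ.erase z) (fun x => by simp) F
  have hA : ∀ f : Fin n → Fin m, q ^ (∑ i ∈ (fp f).part z, (i : ℕ))
      = ∏ i : Fin n, (if f z = f i then q ^ (i : ℕ) else 1) := by
    intro f
    have hpart : (fp f).part z = univ.filter fun i => f z = f i := by
      ext b; rw [mem_part_fp]; simp
    rw [hpart, Finset.prod_ite, Finset.prod_const_one, mul_one, Finset.prod_pow_eq_pow_sum]
  simp_rw [hA]
  rw [← Equiv.sum_comp (Equiv.funSplitAt z (Fin m)).symm
    (fun f => ∏ i : Fin n, (if f z = f i then q ^ (i : ℕ) else 1)), Fintype.sum_prod_type]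
  have hsymm : ∀ (c : Fin m) (g : { j : Fin n // j ≠ z } → Fin m) (i : Fin n),
      (Equiv.funSplitAt z (Fin m)).symm (c, g) i = if h : i = z then c else g ⟨i, h⟩ := by
    intro c g i
    simp only [Equiv.funSplitAt, Equiv.piSplitAt, Equiv.coe_fn_symm_mk]
    split_ifs with h
    · subst h; rfl
    · rfl
  have key : ∀ c : Fin m,
      (∑ g : { j : Fin n // j ≠ z } → Fin m, ∏ i : Fin n,
        (if (Equiv.funSplitAt z (Fin m)).symm (c, g) z
            = (Equiv.funSplitAt z (Fin m)).symm (c, g) i then q ^ (i : ℕ) else 1))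
      = ∏ i : { j : Fin n // j ≠ z }, (q ^ ((i : Fin n) : ℕ) + ((m : ℝ) - 1)) := by
    intro c
    have step1 : ∀ g : { j : Fin n // j ≠ z } → Fin m,
        (∏ i : Fin n, (if (Equiv.funSplitAt z (Fin m)).symm (c, g) z
            = (Equiv.funSplitAt z (Fin m)).symm (c, g) i then q ^ (i : ℕ) else 1))
        = ∏ i : { j : Fin n // j ≠ z }, (if c = g i then q ^ ((i : Fin n) : ℕ) else 1) := by
      intro g
      rw [← Finset.mul_prod_erase univ _ (mem_univ z)]
      have h0 : (if (Equiv.funSplitAt z (Fin m)).symm (c, g) z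
          = (Equiv.funSplitAt z (Fin m)).symm (c, g) z then q ^ (z : ℕ) else 1) = 1 := by
        rw [if_pos rfl]; simp [hz]
      rw [h0, one_mul, hsub]
      refine Fintype.prod_congr _ _ fun i => ?_
      rw [hsymm c g z, dif_pos rfl, hsymm c g i, dif_neg i.2]
    simp_rw [step1]
    rw [← Fintype.prod_sum fun (i : { j : Fin n // j ≠ z }) (v : Fin m) =>
      if c = v then q ^ ((i : Fin n) : ℕ) else 1]
    refine Fintype.prod_congr _ _ fun i => ?_
    have hv : ∀ v : Fin m, (if c = v then q ^ ((i : Fin n) : ℕ) else 1)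
        = (if c = v then q ^ ((i : Fin n) : ℕ) - 1 else 0) + 1 := by
      intro v; split_ifs <;> ring
    simp_rw [hv]
    rw [Finset.sum_add_distrib, Finset.sum_ite_eq, if_pos (mem_univ c), Finset.sum_const,
      Finset.card_univ, Fintype.card_fin, nsmul_eq_mul, mul_one]
    ring
  rw [Finset.sum_congr rfl fun c _ => key c, Finset.sum_const, Finset.card_univ,
    Fintype.card_fin, nsmul_eq_mul]
  rw [← Fin.prod_univ_eq_prod_range (fun j => (m : ℝ) + q ^ j - 1) n,
    ← Finset.mul_prod_erase univ (fun i : Fin n => (m : ℝ) + q ^ (i : ℕ) - 1) (mem_univ z), hsub]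
  have hz0 : ((z : Fin n) : ℕ) = 0 := rfl
  rw [hz0, pow_zero]
  congr 1
  · ring
  · exact Fintype.prod_congr _ _ fun i => by ring

lemma cast_descFactorial (m k : ℕ) :
    ((m.descFactorial k : ℕ) : ℝ) = ∏ j ∈ range k, ((m : ℝ) - (j : ℕ)) := by
  induction k with
  | zero => simp
  | succ k ih =>
    rw [Finset.prod_range_succ, ← ih, Nat.descFactorial_succ]
    by_cases h : k ≤ m
    · rw [Nat.cast_mul, Nat.cast_sub h]; ring
    · push_neg at h
      have h1 : m.descFactorial k = 0 := Nat.descFactorial_eq_zero_iff_lt.2 h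
      rw [h1]
      simp

lemma eval_eq (q : ℝ) (hn : 1 ≤ n) (m : ℕ) :
    ∑ k ∈ Finset.Icc 1 n, (∑ π ∈ univ.filter
        (fun π : Finpartition (univ : Finset (Fin n)) => π.parts.card = k),
        q ^ ∑ i ∈ π.part ⟨0, hn⟩, (i : ℕ)) * ∏ j ∈ range k, ((m : ℝ) - (j : ℕ)) =
      ∏ j ∈ range n, ((m : ℝ) + q ^ j - 1) := by
  rw [← sum_weight (m := m) q hn,
    ← Finset.sum_fiberwise univ (fun f : Fin n → Fin m => fp f)
      (fun f => q ^ (∑ i ∈ (fp f).part ⟨0, hn⟩, (i : ℕ)))]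
  have h1 : ∀ π : Finpartition (univ : Finset (Fin n)),
      (∑ f ∈ univ.filter (fun f : Fin n → Fin m => fp f = π),
        q ^ (∑ i ∈ (fp f).part ⟨0, hn⟩, (i : ℕ)))
      = q ^ (∑ i ∈ π.part ⟨0, hn⟩, (i : ℕ)) * ((m.descFactorial π.parts.card : ℕ) : ℝ) := by
    intro π
    rw [Finset.sum_congr rfl (fun f hf => by rw [(Finset.mem_filter.1 hf).2]),
      Finset.sum_const, nsmul_eq_mul, card_fp_eq, mul_comm]
  rw [Finset.sum_congr rfl fun π _ => h1 π]
  rw [← Finset.sum_fiberwise_of_maps_to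
    (g := fun π : Finpartition (univ : Finset (Fin n)) => π.parts.card)
    (t := Finset.Icc 1 n) ?_ _]
  · refine Finset.sum_congr rfl fun k _ => ?_
    rw [Finset.sum_mul]
    refine Finset.sum_congr rfl fun π hπ => ?_
    rw [cast_descFactorial, (Finset.mem_filter.1 hπ).2]
  · intro π _
    rw [Finset.mem_Icc]
    have hne : (univ : Finset (Fin n)) ≠ ⊥ := by
      have : Nonempty (Fin n) := ⟨⟨0, hn⟩⟩
      simpa [Finset.bot_eq_empty] using Finset.univ_nonempty.ne_empty
    refine ⟨Finset.card_pos.2 (π.parts_nonempty hne), ?_⟩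
    have := π.card_parts_le_card
    rwa [Finset.card_univ, Fintype.card_fin] at this

open Polynomial in
/-- Cigler's `q`-Stirling expansion: for `n ≥ 1`,
`X(X+q-1)(X+q²-1)⋯(X+q^{n-1}-1) = Σ_{k=1}^n S̃_q(n,k) · X(X-1)⋯(X-k+1)` in `ℝ[X]`,
where `S̃_q(n,k) = Σ_π q^{cigl(π)}`, summed over all partitions `π` of `{0,…,n-1}`
into exactly `k` nonempty blocks, and `cigl(π)` is the sum of the elements of the
block of `π` containing `0`. -/
theorem cigler_qStirling_expansion (q : ℝ) (n : ℕ) (hn : 1 ≤ n) :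
    ∏ j ∈ Finset.range n, (X + C (q ^ j - 1)) =
      ∑ k ∈ Finset.Icc 1 n,
        C (∑ π ∈ Finset.univ.filter
              (fun π : Finpartition (Finset.univ : Finset (Fin n)) => π.parts.card = k),
            q ^ ∑ i ∈ π.part ⟨0, hn⟩, (i : ℕ)) *
          ∏ j ∈ Finset.range k, (X - C (j : ℝ)) := by
  apply Polynomial.eq_of_infinite_eval_eq
  refine Set.Infinite.mono ?_ (Set.infinite_range_of_injective (Nat.cast_injective (R := ℝ)))
  rintro x ⟨m, rfl⟩
  simp only [Set.mem_setOf_eq, eval_prod, eval_add, eval_X, eval_C, eval_finset_sum, eval_mul,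
    eval_sub]
  exact Eq.trans (Finset.prod_congr rfl fun j _ => by ring) (eval_eq q hn m).symm
end

section
/- (cigl-q-Dobinski formula) Fix a real number q. For every n ≥ 1, e^{−1} · Σ_{k≥0} k(k + q − 1)(k + q^2 − 1)⋯(k + q^{n−1} − 1) / k! = B̃_n(q), where the series converges and B̃_n(q) = Σ_{π} q^{cigl(π)}, the sum running over all partitions π of the set {0,1,…,n−1}, and cigl(π) is the sum of the elements of the block of π containing 0. -/
open Finset

/-- Bell numbers, via the binomial recurrence. -/
def bellNum : ℕ → ℕ
  | 0 => 1
  | m + 1 => ∑ r ∈ (Finset.range (m + 1)).attach, (m.choose r.1) * bellNum r.1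
  decreasing_by exact Finset.mem_range.mp r.2

lemma bellNum_zero : bellNum 0 = 1 := by rw [bellNum]

lemma bellNum_succ (m : ℕ) :
    bellNum (m + 1) = ∑ r ∈ Finset.range (m + 1), m.choose r * bellNum r := by
  rw [bellNum]
  exact Finset.sum_attach (Finset.range (m + 1)) (fun r => m.choose r * bellNum r)

variable {α : Type*} [DecidableEq α]

lemma avoid_parts_of_mem {t : Finset α} (P : Finpartition t) {b : Finset α}
    (hb : b ∈ P.parts) : (P.avoid b).parts = P.parts.erase b := by
  ext c
  rw [Finpartition.mem_avoid, Finset.mem_erase]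
  constructor
  · rintro ⟨d, hd, hdb, rfl⟩
    have hdb' : d ≠ b := by rintro rfl; exact hdb le_rfl
    have hdisj : Disjoint d b := P.disjoint hd hb hdb'
    rw [hdisj.sdiff_eq_left]
    exact ⟨hdb', hd⟩
  · rintro ⟨hcb, hc⟩
    have hdisj : Disjoint c b := P.disjoint hc hb hcb
    refine ⟨c, hc, ?_, hdisj.sdiff_eq_left⟩
    intro hle
    exact (P.nonempty_of_mem_parts hc).ne_empty (hdisj.eq_bot_of_le hle)

/-- Key decomposition: sum over all partitions of `t` of a function of the block
containing `a`, grouped by that block. -/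
lemma sum_part_eq {M : Type*} [AddCommMonoid M] (t : Finset α) (a : α) (ha : a ∈ t)
    (f : Finset α → M) :
    ∑ π ∈ (Finset.univ : Finset (Finpartition t)), f (π.part a) =
      ∑ S ∈ (t.erase a).powerset,
        (Fintype.card (Finpartition ((t.erase a) \ S))) • f (insert a S) := by
  have hmaps : ∀ π ∈ (Finset.univ : Finset (Finpartition t)),
      (π.part a).erase a ∈ (t.erase a).powerset := by
    intro π _
    rw [Finset.mem_powerset]
    exact Finset.erase_subset_erase a (π.le ((π.part_mem.mpr ha)))
  rw [← Finset.sum_fiberwise_of_maps_to hmaps]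
  refine Finset.sum_congr rfl fun S hS => ?_
  have haS : a ∉ S := fun h => (Finset.mem_erase.mp (Finset.mem_powerset.mp hS h)).1 rfl
  have hpart : ∀ π : Finpartition t, (π.part a).erase a = S → π.part a = insert a S := by
    intro π h
    rw [← h, Finset.insert_erase (π.mem_part ha)]
  have hcongr : ∀ π ∈ (Finset.univ : Finset (Finpartition t)).filter
      (fun π => (π.part a).erase a = S), f (π.part a) = f (insert a S) := by
    intro π hπ
    rw [Finset.mem_filter] at hπ
    rw [hpart π hπ.2]
  rw [Finset.sum_congr rfl hcongr, Finset.sum_const]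
  congr 1
  have hSt : S ⊆ t.erase a := Finset.mem_powerset.mp hS
  have hbne : (insert a S : Finset α) ≠ ⊥ := by
    simpa using Finset.insert_ne_empty a S
  have hdisj : Disjoint ((t.erase a) \ S) (insert a S) := by
    rw [Finset.disjoint_insert_right]
    exact ⟨fun h => (Finset.mem_erase.mp (Finset.mem_sdiff.mp h).1).1 rfl,
      Finset.sdiff_disjoint⟩
  have hsup : ((t.erase a) \ S) ⊔ insert a S = t := by
    rw [Finset.sup_eq_union, Finset.union_insert, Finset.sdiff_union_of_subset hSt,
      Finset.insert_erase ha]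
  have hEq : t \ insert a S = (t.erase a) \ S := by
    ext x
    simp only [Finset.mem_sdiff, Finset.mem_insert, Finset.mem_erase, not_or]
    tauto
  rw [← Finset.card_univ]
  refine Finset.card_nbij' (fun π => (π.avoid (insert a S)).copy hEq)
    (fun ρ => ρ.extend hbne hdisj hsup) (fun π _ => Finset.mem_univ _)
    (fun ρ _ => ?_) (fun π hπ => ?_) (fun ρ _ => ?_)
  · -- extend lands in the fiber
    simp only [Finset.mem_coe, Finset.mem_filter, Finset.mem_univ, true_and]
    have hmem : insert a S ∈ (ρ.extend hbne hdisj hsup).parts := by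
      rw [Finpartition.extend_parts]; exact Finset.mem_insert_self _ _
    rw [Finpartition.part_eq_of_mem _ hmem (Finset.mem_insert_self a S),
      Finset.erase_insert haS]
  · -- left inverse: extend (copy (avoid π)) = π
    simp only [Finset.mem_coe, Finset.mem_filter, Finset.mem_univ, true_and] at hπ
    have hb : insert a S ∈ π.parts := hpart π hπ ▸ (π.part_mem.mpr ha)
    ext1
    rw [Finpartition.extend_parts]
    show insert (insert a S) ((π.avoid (insert a S)).copy hEq).parts = π.parts
    rw [Finpartition.copy_parts, avoid_parts_of_mem π hb, Finset.insert_erase hb]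
  · -- right inverse: copy (avoid (extend ρ)) = ρ
    have hmem : insert a S ∈ (ρ.extend hbne hdisj hsup).parts := by
      rw [Finpartition.extend_parts]; exact Finset.mem_insert_self _ _
    have hnotmem : insert a S ∉ ρ.parts := by
      intro h
      have h2 : a ∈ (t.erase a) \ S := ρ.le h (Finset.mem_insert_self a S)
      exact (Finset.mem_erase.mp (Finset.mem_sdiff.mp h2).1).1 rfl
    ext1
    rw [Finpartition.copy_parts, avoid_parts_of_mem _ hmem, Finpartition.extend_parts,
      Finset.erase_insert hnotmem]

lemma card_finpartition (t : Finset α) :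
    Fintype.card (Finpartition t) = bellNum t.card := by
  induction t using Finset.strongInduction with
  | _ t ih =>
    rcases t.eq_empty_or_nonempty with rfl | ⟨a, ha⟩
    · rw [Finset.card_empty, bellNum_zero]
      have hbot : ((∅ : Finset α) : Finset α) = (⊥ : Finset α) := rfl
      rw [Fintype.card_eq_one_iff]
      refine ⟨⊥, fun P => ?_⟩
      ext1
      rw [Finpartition.parts_eq_empty_iff.mpr rfl, Finpartition.parts_eq_empty_iff.mpr rfl]
    · have key := sum_part_eq t a ha (fun _ => (1 : ℕ))
      simp only [smul_eq_mul, mul_one] at key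
      have hcard : Fintype.card (Finpartition t) =
          ∑ π ∈ (Finset.univ : Finset (Finpartition t)), (1 : ℕ) := by
        rw [Finset.sum_const, smul_eq_mul, mul_one, Finset.card_univ]
      rw [hcard, key]
      have hstep : ∀ S ∈ (t.erase a).powerset,
          Fintype.card (Finpartition ((t.erase a) \ S)) =
            bellNum ((t.erase a).card - S.card) := by
        intro S hS
        have hsub : (t.erase a) \ S ⊂ t :=
          lt_of_le_of_lt (Finset.sdiff_subset) (Finset.erase_ssubset ha)
        rw [ih _ hsub, Finset.card_sdiff_of_subset (Finset.mem_powerset.mp hS)]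
      rw [Finset.sum_congr rfl hstep]
      have := Finset.sum_powerset_apply_card
        (fun j => bellNum ((t.erase a).card - j)) (x := t.erase a)
      rw [this]
      set m := (t.erase a).card with hm
      have hpos : 0 < t.card := Finset.card_pos.mpr ⟨a, ha⟩
      have htc : t.card = m + 1 := by
        rw [hm, Finset.card_erase_of_mem ha]
        omega
      rw [htc, bellNum_succ]
      rw [← Finset.sum_range_reflect]
      refine Finset.sum_congr rfl fun j hj => ?_
      rw [Finset.mem_range] at hj
      have hj' : j ≤ m := by omega
      have h1 : m + 1 - 1 - j = m - j := by omega
      rw [h1, smul_eq_mul, Nat.sub_sub_self hj', Nat.choose_symm hj']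


lemma dobinski (m : ℕ) : Summable (fun k : ℕ => (k : ℝ) ^ m / (Nat.factorial k : ℝ)) ∧
    Real.exp (-1) * ∑' k : ℕ, (k : ℝ) ^ m / (Nat.factorial k : ℝ) = bellNum m := by
  induction m using Nat.strong_induction_on with
  | _ m ih =>
    rcases m with _ | m
    · have hs : Summable (fun k : ℕ => (k : ℝ) ^ 0 / (Nat.factorial k : ℝ)) := by
        have := Real.summable_pow_div_factorial 1
        refine this.congr fun k => ?_
        simp
      refine ⟨hs, ?_⟩
      have hexp : ∑' k : ℕ, (k : ℝ) ^ 0 / (Nat.factorial k : ℝ) = Real.exp 1 := by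
        rw [Real.exp_eq_exp_ℝ, NormedSpace.exp_eq_tsum_div]
        refine tsum_congr fun k => ?_
        simp
      rw [hexp, ← Real.exp_add, bellNum_zero]
      simp
    · -- inductive step
      set g : ℕ → ℕ → ℝ := fun r k => (k : ℝ) ^ r / (Nat.factorial k : ℝ) with hg
      have hshift : ∀ k : ℕ, ((k + 1 : ℕ) : ℝ) ^ (m + 1) / (Nat.factorial (k + 1) : ℝ) =
          ∑ r ∈ Finset.range (m + 1), (m.choose r : ℝ) * g r k := by
        intro k
        have hfac : (Nat.factorial (k + 1) : ℝ) = ((k : ℝ) + 1) * (Nat.factorial k : ℝ) := by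
          rw [Nat.factorial_succ]; push_cast; ring
        have hne : ((k : ℝ) + 1) ≠ 0 := by positivity
        have hexp : ((k : ℝ) + 1) ^ (m + 1) = ((k : ℝ) + 1) * ((k : ℝ) + 1) ^ m := by ring
        have hpow : ((k : ℝ) + 1) ^ m =
            ∑ r ∈ Finset.range (m + 1), (k : ℝ) ^ r * (m.choose r : ℝ) := by
          have := add_pow (k : ℝ) 1 m
          simpa using this
        have key : ((k : ℝ) + 1) ^ (m + 1) / (((k : ℝ) + 1) * (Nat.factorial k : ℝ)) =
            ((k : ℝ) + 1) ^ m / (Nat.factorial k : ℝ) := by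
          rw [hexp, mul_div_mul_left _ _ hne]
        push_cast
        rw [hfac, key, hpow, Finset.sum_div]
        refine Finset.sum_congr rfl fun r _ => ?_
        rw [hg]
        ring
      have hsum_shift : Summable (fun k : ℕ =>
          ((k + 1 : ℕ) : ℝ) ^ (m + 1) / (Nat.factorial (k + 1) : ℝ)) := by
        refine Summable.congr ?_ fun k => (hshift k).symm
        refine summable_sum fun r hr => ?_
        exact ((ih r (Finset.mem_range.mp hr)).1).mul_left _
      have hsum : Summable (fun k : ℕ => (k : ℝ) ^ (m + 1) / (Nat.factorial k : ℝ)) :=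
        (summable_nat_add_iff 1).mp hsum_shift
      refine ⟨hsum, ?_⟩
      rw [Summable.tsum_eq_zero_add hsum]
      have hzero : ((0 : ℕ) : ℝ) ^ (m + 1) / (Nat.factorial 0 : ℝ) = 0 := by
        simp
      rw [hzero, zero_add]
      have hmain : ∑' k : ℕ, ((k + 1 : ℕ) : ℝ) ^ (m + 1) / (Nat.factorial (k + 1) : ℝ) =
          ∑ r ∈ Finset.range (m + 1), (m.choose r : ℝ) * ∑' k : ℕ, g r k := by
        have hml : ∀ r ∈ Finset.range (m + 1), (m.choose r : ℝ) * ∑' k : ℕ, g r k =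
            ∑' k : ℕ, (m.choose r : ℝ) * g r k := fun r _ => (tsum_mul_left).symm
        rw [Finset.sum_congr rfl hml,
          ← Summable.tsum_finsetSum (fun r hr => ((ih r (Finset.mem_range.mp hr)).1).mul_left _)]
        refine tsum_congr fun k => ?_
        rw [← hshift k]
      rw [hmain, Finset.mul_sum, bellNum_succ]
      push_cast
      refine Finset.sum_congr rfl fun r hr => ?_
      have h2 := (ih r (Finset.mem_range.mp hr)).2
      rw [← h2, hg]
      ring


lemma aux_tsum (m : ℕ) :
    Summable (fun k : ℕ => (k : ℝ) * ((k : ℝ) - 1) ^ m / (Nat.factorial k : ℝ)) ∧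
    Real.exp (-1) * ∑' k : ℕ, (k : ℝ) * ((k : ℝ) - 1) ^ m / (Nat.factorial k : ℝ) =
      bellNum m := by
  have hsh : ∀ k : ℕ, ((k + 1 : ℕ) : ℝ) * (((k + 1 : ℕ) : ℝ) - 1) ^ m /
      (Nat.factorial (k + 1) : ℝ) = (k : ℝ) ^ m / (Nat.factorial k : ℝ) := by
    intro k
    have hfac : (Nat.factorial (k + 1) : ℝ) = ((k : ℝ) + 1) * (Nat.factorial k : ℝ) := by
      rw [Nat.factorial_succ]; push_cast; ring
    have hne : ((k : ℝ) + 1) ≠ 0 := by positivity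
    push_cast
    rw [hfac, show (k : ℝ) + 1 - 1 = (k : ℝ) by ring, mul_div_mul_left _ _ hne]
  have hs1 : Summable (fun k : ℕ => ((k + 1 : ℕ) : ℝ) * (((k + 1 : ℕ) : ℝ) - 1) ^ m /
      (Nat.factorial (k + 1) : ℝ)) :=
    Summable.congr (dobinski m).1 fun k => (hsh k).symm
  have hs : Summable (fun k : ℕ => (k : ℝ) * ((k : ℝ) - 1) ^ m / (Nat.factorial k : ℝ)) :=
    (summable_nat_add_iff 1).mp hs1
  refine ⟨hs, ?_⟩
  rw [Summable.tsum_eq_zero_add hs]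
  have hzero : ((0 : ℕ) : ℝ) * (((0 : ℕ) : ℝ) - 1) ^ m / (Nat.factorial 0 : ℝ) = 0 := by
    simp
  rw [hzero, zero_add]
  have hcongr : ∑' k : ℕ, ((k + 1 : ℕ) : ℝ) * (((k + 1 : ℕ) : ℝ) - 1) ^ m /
      (Nat.factorial (k + 1) : ℝ) = ∑' k : ℕ, (k : ℝ) ^ m / (Nat.factorial k : ℝ) :=
    tsum_congr hsh
  rw [hcongr]
  exact (dobinski m).2


/-- cigl-`q`-Dobinski formula: for `n ≥ 1`,
`e⁻¹ · Σ_{k ≥ 0} k(k+q-1)(k+q²-1)⋯(k+q^{n-1}-1) / k! = B̃_n(q)`, the series being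
convergent, where `B̃_n(q) = Σ_π q^{cigl(π)}`, summed over all partitions `π` of
`{0,…,n-1}`, and `cigl(π)` is the sum of the elements of the block of `π` containing `0`. -/
theorem cigl_q_dobinski (q : ℝ) (n : ℕ) (hn : 1 ≤ n) :
    Summable (fun k : ℕ =>
      (∏ j ∈ Finset.range n, ((k : ℝ) + q ^ j - 1)) / (Nat.factorial k : ℝ)) ∧
    Real.exp (-1) *
        ∑' k : ℕ, (∏ j ∈ Finset.range n, ((k : ℝ) + q ^ j - 1)) / (Nat.factorial k : ℝ) =
      ∑ π ∈ (Finset.univ : Finset (Finpartition (Finset.univ : Finset (Fin n)))),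
        q ^ ∑ i ∈ π.part ⟨0, hn⟩, (i : ℕ) := by
  classical
  set a : Fin n := ⟨0, hn⟩ with ha
  set E : Finset ℕ := (Finset.range n).erase 0 with hE
  have h0mem : (0 : ℕ) ∈ Finset.range n := Finset.mem_range.mpr hn
  have hEcard : E.card = n - 1 := by
    rw [hE, Finset.card_erase_of_mem h0mem, Finset.card_range]
  -- termwise identity
  have hterm : ∀ k : ℕ, (∏ j ∈ Finset.range n, ((k : ℝ) + q ^ j - 1)) / (Nat.factorial k : ℝ)
      = ∑ S ∈ E.powerset, q ^ (∑ j ∈ S, j) *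
          ((k : ℝ) * ((k : ℝ) - 1) ^ ((E \ S).card) / (Nat.factorial k : ℝ)) := by
    intro k
    have h1 : ∏ j ∈ Finset.range n, ((k : ℝ) + q ^ j - 1)
        = ((k : ℝ) + q ^ 0 - 1) * ∏ j ∈ E, ((k : ℝ) + q ^ j - 1) :=
      (Finset.mul_prod_erase _ _ h0mem).symm
    have h2 : ∏ j ∈ E, ((k : ℝ) + q ^ j - 1) = ∏ j ∈ E, (q ^ j + ((k : ℝ) - 1)) :=
      Finset.prod_congr rfl fun j _ => by ring
    rw [h1, h2, Finset.prod_add, pow_zero, show (k : ℝ) + 1 - 1 = (k : ℝ) by ring,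
      Finset.mul_sum, Finset.sum_div]
    refine Finset.sum_congr rfl fun S _ => ?_
    rw [Finset.prod_const, Finset.prod_pow_eq_pow_sum]
    ring
  have hsummand : Summable (fun k : ℕ => ∑ S ∈ E.powerset, q ^ (∑ j ∈ S, j) *
      ((k : ℝ) * ((k : ℝ) - 1) ^ ((E \ S).card) / (Nat.factorial k : ℝ))) :=
    summable_sum fun S _ => ((aux_tsum _).1).mul_left _
  have hsum : Summable (fun k : ℕ =>
      (∏ j ∈ Finset.range n, ((k : ℝ) + q ^ j - 1)) / (Nat.factorial k : ℝ)) :=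
    hsummand.congr fun k => (hterm k).symm
  refine ⟨hsum, ?_⟩
  -- compute the LHS
  have hlhs : Real.exp (-1) *
      ∑' k : ℕ, (∏ j ∈ Finset.range n, ((k : ℝ) + q ^ j - 1)) / (Nat.factorial k : ℝ)
      = ∑ S ∈ E.powerset, q ^ (∑ j ∈ S, j) * (bellNum ((E \ S).card) : ℝ) := by
    rw [tsum_congr hterm,
      Summable.tsum_finsetSum (fun S _ => ((aux_tsum ((E \ S).card)).1.mul_left (q ^ (∑ j ∈ S, j)))),
      Finset.mul_sum]
    refine Finset.sum_congr rfl fun S _ => ?_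
    rw [tsum_mul_left, ← mul_assoc, mul_comm (Real.exp (-1)) (q ^ (∑ j ∈ S, j)), mul_assoc,
      (aux_tsum ((E \ S).card)).2]
  rw [hlhs]
  -- compute the RHS
  have hrhs : ∑ π ∈ (Finset.univ : Finset (Finpartition (Finset.univ : Finset (Fin n)))),
      q ^ ∑ i ∈ π.part a, (i : ℕ)
      = ∑ S ∈ ((Finset.univ : Finset (Fin n)).erase a).powerset,
          (bellNum (((Finset.univ : Finset (Fin n)).erase a \ S).card) : ℝ) *
            q ^ (∑ i ∈ S, (i : ℕ)) := by
    rw [sum_part_eq (Finset.univ : Finset (Fin n)) a (Finset.mem_univ a)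
      (fun T => q ^ ∑ i ∈ T, (i : ℕ))]
    refine Finset.sum_congr rfl fun S hS => ?_
    have haS : a ∉ S := fun h =>
      (Finset.mem_erase.mp (Finset.mem_powerset.mp hS h)).1 rfl
    rw [card_finpartition, nsmul_eq_mul, Finset.sum_insert haS]
    norm_num [ha]
  rw [hrhs]
  -- bridge the two sums
  refine (Finset.sum_nbij' (fun S : Finset (Fin n) => S.image (fun i : Fin n => (i : ℕ)))
    (fun T : Finset ℕ => Finset.univ.filter (fun i : Fin n => (i : ℕ) ∈ T))
    ?_ ?_ ?_ ?_ ?_).symm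
  · -- maps into E.powerset
    intro S hS
    rw [Finset.mem_powerset] at hS ⊢
    intro x hx
    rw [Finset.mem_image] at hx
    obtain ⟨i, hiS, rfl⟩ := hx
    have hia := Finset.mem_erase.mp (hS hiS)
    rw [hE, Finset.mem_erase]
    refine ⟨fun h => hia.1 ?_, Finset.mem_range.mpr i.isLt⟩
    exact Fin.ext (h.trans (by rw [ha]))
  · -- maps back
    intro T hT
    rw [Finset.mem_powerset] at hT ⊢
    intro i hi
    rw [Finset.mem_filter] at hi
    have := hT hi.2
    rw [hE, Finset.mem_erase] at this
    rw [Finset.mem_erase]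
    exact ⟨fun h => this.1 (by rw [h, ha]), Finset.mem_univ i⟩
  · -- left inverse
    intro S _
    ext i
    simp only [Finset.mem_filter, Finset.mem_univ, true_and, Finset.mem_image]
    constructor
    · rintro ⟨x, hxS, hx⟩
      rwa [show x = i from Fin.ext hx] at hxS
    · intro h; exact ⟨i, h, rfl⟩
  · -- right inverse
    intro T hT
    ext x
    simp only [Finset.mem_image, Finset.mem_filter, Finset.mem_univ, true_and]
    constructor
    · rintro ⟨i, hi, rfl⟩; exact hi
    · intro hx
      have hxn : x < n := by
        have := Finset.mem_powerset.mp hT hx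
        rw [hE, Finset.mem_erase, Finset.mem_range] at this
        exact this.2
      exact ⟨⟨x, hxn⟩, hx, rfl⟩
  · -- terms agree
    intro S hS
    have hScard : S.card = (S.image (fun i : Fin n => (i : ℕ))).card :=
      (Finset.card_image_of_injective S Fin.val_injective).symm
    have hsum' : ∑ j ∈ S.image (fun i : Fin n => (i : ℕ)), j = ∑ i ∈ S, (i : ℕ) :=
      Finset.sum_image fun x _ y _ h => Fin.val_injective h
    have hc1 : ((Finset.univ : Finset (Fin n)).erase a \ S).card = n - 1 - S.card := by
      rw [Finset.card_sdiff_of_subset (Finset.mem_powerset.mp hS),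
        Finset.card_erase_of_mem (Finset.mem_univ a), Finset.card_univ, Fintype.card_fin]
    have hsub : S.image (fun i : Fin n => (i : ℕ)) ⊆ E := by
      intro x hx
      rw [Finset.mem_image] at hx
      obtain ⟨i, hiS, rfl⟩ := hx
      have hia := Finset.mem_erase.mp (Finset.mem_powerset.mp hS hiS)
      rw [hE, Finset.mem_erase]
      exact ⟨fun h => hia.1 (Fin.ext (h.trans (by rw [ha]))), Finset.mem_range.mpr i.isLt⟩
    have hc2 : (E \ S.image (fun i : Fin n => (i : ℕ))).card = n - 1 - S.card := by
      rw [Finset.card_sdiff_of_subset hsub, hEcard, ← hScard]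
    rw [hsum', hc1, hc2, mul_comm]
end
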